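/- arXiv:1410.6835 — 6 statements merged into one kernel-verified Lean document; each statement's English description precedes it below -/
import Mathlib

section
/- Let the surface S ⊂ G_m^3 be the zero set of the polynomial r₁r₂r₃ + r₁ + r₂ + r₃. Then the union of all positive-dimensional cosets (translates of algebraic subgroups) contained in S is exactly the union of the six lines obtained by permuting the coordinates of {1} × {-1} × G_m, i.e. the lines {(t,1,-1) : t ∈ ℂ*}, {(t,-1,1) : t ∈ ℂ*}, and their coordinate permutations. -/
/-!
A coset `t ↦ (u₁t^{e₁}, u₂t^{e₂}, u₃t^{e₃})` lies in `S` iff the Laurent polynomial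
`u₁u₂u₃ t^{e₁+e₂+e₃} + u₁t^{e₁} + u₂t^{e₂} + u₃t^{e₃}` vanishes on `ℂ*`. Monomials are linearly
independent there and all four coefficients are nonzero, so each exponent must occur at least
twice; this forces two of the `eᵢ` to vanish, say `e₁ = e₂ = 0 ≠ e₃`, and then comparing
coefficients gives `u₁ + u₂ = 0` and `u₁u₂ = -1`, i.e. `(u₁, u₂) = ±(1, -1)`.
-/

open Complex

/-- The surface `S ⊂ G_m³` cut out by `r₁r₂r₃ + r₁ + r₂ + r₃ = 0`. -/
def cubicSurface : Set (ℂ × ℂ × ℂ) :=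
  {z | z.1 ≠ 0 ∧ z.2.1 ≠ 0 ∧ z.2.2 ≠ 0 ∧
    z.1 * z.2.1 * z.2.2 + z.1 + z.2.1 + z.2.2 = 0}

/-- The union of all positive-dimensional cosets (translates of algebraic subgroups of
`G_m³`) contained in `cubicSurface`: a point lies in such a coset iff it lies on a curve
`t ↦ (u₁t^{e₁}, u₂t^{e₂}, u₃t^{e₃})`, `(e₁,e₂,e₃) ≠ 0`, entirely contained in the surface. -/
def cosetLocus : Set (ℂ × ℂ × ℂ) :=
  {z | ∃ (u₁ u₂ u₃ : ℂ) (e₁ e₂ e₃ : ℤ), ¬(e₁ = 0 ∧ e₂ = 0 ∧ e₃ = 0) ∧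
    (∃ t : ℂ, t ≠ 0 ∧ z = (u₁ * t ^ e₁, u₂ * t ^ e₂, u₃ * t ^ e₃)) ∧
    (∀ t : ℂ, t ≠ 0 → (u₁ * t ^ e₁, u₂ * t ^ e₂, u₃ * t ^ e₃) ∈ cubicSurface)}

/-- The six lines obtained by permuting the coordinates of `{(1,-1)} × G_m`. -/
def sixLines : Set (ℂ × ℂ × ℂ) :=
  {z | (z.1 ≠ 0 ∧ ((z.2.1 = 1 ∧ z.2.2 = -1) ∨ (z.2.1 = -1 ∧ z.2.2 = 1))) ∨
       (z.2.1 ≠ 0 ∧ ((z.1 = 1 ∧ z.2.2 = -1) ∨ (z.1 = -1 ∧ z.2.2 = 1))) ∨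
       (z.2.2 ≠ 0 ∧ ((z.1 = 1 ∧ z.2.1 = -1) ∨ (z.1 = -1 ∧ z.2.1 = 1)))}

section LaurentMonomials

variable {ι K : Type*} [Field K] [Infinite K]

open Polynomial in
theorem sum_filter_eq_zero_of_sum_mul_zpow_eq_zero {s : Finset ι} {c : ι → K} {n : ι → ℤ}
    (h : ∀ t : K, t ≠ 0 → ∑ i ∈ s, c i * t ^ n i = 0) (m : ℤ) :
    ∑ i ∈ s with n i = m, c i = 0 := by
  set N : ℕ := ∑ i ∈ s, (n i).natAbs
  have hN : ∀ i ∈ s, 0 ≤ n i + N := fun i hi => by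
    have := Finset.single_le_sum (f := fun i => (n i).natAbs) (fun _ _ => Nat.zero_le _) hi
    omega
  set p : K[X] := ∑ i ∈ s, C (c i) * X ^ (n i + N).toNat
  have hp : p = 0 := by
    refine p.eq_zero_of_infinite_isRoot
      ((Set.finite_singleton 0).infinite_compl.mono fun t (ht : t ≠ 0) => ?_)
    have hshift : ∀ i ∈ s, t ^ (n i + N).toNat = t ^ n i * t ^ N := fun i hi => by
      rw [← zpow_natCast, Int.toNat_of_nonneg (hN i hi), zpow_add₀ ht, zpow_natCast]
    calc p.eval t = ∑ i ∈ s, c i * t ^ (n i + N).toNat := by simp [p, eval_finsetSum]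
      _ = (∑ i ∈ s, c i * t ^ n i) * t ^ N := by
        rw [Finset.sum_mul]
        exact Finset.sum_congr rfl fun i hi => by rw [hshift i hi, mul_assoc]
      _ = 0 := by rw [h t ht, zero_mul]
  by_cases hm : 0 ≤ m + N
  · have hcoeff := congrArg (coeff · (m + N).toNat) hp
    simp only [p, finsetSum_coeff, coeff_C_mul_X_pow, coeff_zero] at hcoeff
    rw [Finset.sum_filter]
    refine (Finset.sum_congr rfl fun i hi => if_congr ?_ rfl rfl).trans hcoeff
    have := hN i hi
    omega
  · refine Finset.sum_eq_zero fun i hi => ?_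
    obtain ⟨his, rfl⟩ := Finset.mem_filter.1 hi
    exact (hm (hN i his)).elim

theorem exists_ne_zpow_eq_of_sum_mul_zpow_eq_zero {s : Finset ι} {c : ι → K} {n : ι → ℤ}
    (h : ∀ t : K, t ≠ 0 → ∑ i ∈ s, c i * t ^ n i = 0) {i : ι} (hi : i ∈ s) (hci : c i ≠ 0) :
    ∃ j ∈ s, j ≠ i ∧ n j = n i := by
  by_contra! hne
  have hsingle : ∑ j ∈ s with n j = n i, c j = c i :=
    Finset.sum_eq_single_of_mem i (Finset.mem_filter.2 ⟨hi, rfl⟩)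
      fun j hj hji => absurd (Finset.mem_filter.1 hj).2 (hne j (Finset.mem_filter.1 hj).1 hji)
  exact hci (hsingle ▸ sum_filter_eq_zero_of_sum_mul_zpow_eq_zero h (n i))

theorem eq_zero_of_forall_mul_zpow_add_eq_zero {a b : K} {e : ℤ} (he : e ≠ 0)
    (h : ∀ t : K, t ≠ 0 → a * t ^ e + b = 0) : a = 0 ∧ b = 0 := by
  have h' : ∀ t : K, t ≠ 0 → ∑ i, ![a, b] i * t ^ ![e, 0] i = 0 := by
    simpa using h
  exact ⟨by simpa [Finset.sum_filter, he, he.symm] using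
      sum_filter_eq_zero_of_sum_mul_zpow_eq_zero h' e,
    by simpa [Finset.sum_filter, he, he.symm] using
      sum_filter_eq_zero_of_sum_mul_zpow_eq_zero h' 0⟩

theorem eq_one_neg_one_or_eq_neg_one_one_of_forall_zpow {x y w : K} {e : ℤ} (he : e ≠ 0)
    (hw : w ≠ 0)
    (h : ∀ t : K, t ≠ 0 → (x * y + 1) * w * t ^ e + (x + y) = 0) :
    (x = 1 ∧ y = -1) ∨ (x = -1 ∧ y = 1) := by
  obtain ⟨hxyw, hxy⟩ := eq_zero_of_forall_mul_zpow_add_eq_zero he h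
  have hy : y = -x := by linear_combination hxy
  have hxx : x * x = 1 := by
    have := (mul_eq_zero.1 hxyw).resolve_right hw
    linear_combination -this + x * hxy
  rcases mul_self_eq_one_iff.1 hxx with rfl | rfl
  · exact Or.inl ⟨rfl, by simpa using hy⟩
  · exact Or.inr ⟨rfl, by simpa using hy⟩

end LaurentMonomials

theorem mem_sixLines_of_forall_mem_cubicSurface {u₁ u₂ u₃ : ℂ} {e₁ e₂ e₃ : ℤ}
    (hne : ¬(e₁ = 0 ∧ e₂ = 0 ∧ e₃ = 0))
    (hall : ∀ t : ℂ, t ≠ 0 → (u₁ * t ^ e₁, u₂ * t ^ e₂, u₃ * t ^ e₃) ∈ cubicSurface)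
    {t₀ : ℂ} (ht₀ : t₀ ≠ 0) :
    (u₁ * t₀ ^ e₁, u₂ * t₀ ^ e₂, u₃ * t₀ ^ e₃) ∈ sixLines := by
  obtain ⟨hu₁, hu₂, hu₃, -⟩ : u₁ ≠ 0 ∧ u₂ ≠ 0 ∧ u₃ ≠ 0 ∧ _ := by
    simpa [cubicSurface] using hall 1 one_ne_zero
  have H : ∀ t : ℂ, t ≠ 0 → u₁ * u₂ * u₃ * t ^ (e₁ + e₂ + e₃) + u₁ * t ^ e₁ + u₂ * t ^ e₂
      + u₃ * t ^ e₃ = 0 := fun t ht => by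
    rw [zpow_add₀ ht, zpow_add₀ ht]
    linear_combination (hall t ht).2.2.2
  set n : Fin 4 → ℤ := ![e₁ + e₂ + e₃, e₁, e₂, e₃] with hn
  have hshared : ∀ i, ∃ j, j ≠ i ∧ n j = n i := fun i => by
    obtain ⟨j, -, hji, hj⟩ := exists_ne_zpow_eq_of_sum_mul_zpow_eq_zero (s := Finset.univ)
      (c := ![u₁ * u₂ * u₃, u₁, u₂, u₃]) (n := n)
      (by simpa [hn, Fin.sum_univ_four, add_assoc] using H) (Finset.mem_univ i)
      (by fin_cases i <;> simp [*])
    exact ⟨j, hji, hj⟩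
  have hexp : (e₂ = 0 ∧ e₃ = 0 ∧ e₁ ≠ 0) ∨ (e₁ = 0 ∧ e₃ = 0 ∧ e₂ ≠ 0) ∨
      (e₁ = 0 ∧ e₂ = 0 ∧ e₃ ≠ 0) := by
    simp [hn, Fin.forall_fin_succ, Fin.exists_fin_succ] at hshared
    omega
  rcases hexp with ⟨rfl, rfl, he⟩ | ⟨rfl, rfl, he⟩ | ⟨rfl, rfl, he⟩ <;>
    simp only [add_zero, zero_add, zpow_zero, mul_one] at H ⊢
  · exact Or.inl ⟨mul_ne_zero hu₁ (zpow_ne_zero _ ht₀),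
      eq_one_neg_one_or_eq_neg_one_one_of_forall_zpow he hu₁ fun t ht => by
        linear_combination H t ht⟩
  · exact Or.inr <| Or.inl ⟨mul_ne_zero hu₂ (zpow_ne_zero _ ht₀),
      eq_one_neg_one_or_eq_neg_one_one_of_forall_zpow he hu₂ fun t ht => by
        linear_combination H t ht⟩
  · exact Or.inr <| Or.inr ⟨mul_ne_zero hu₃ (zpow_ne_zero _ ht₀),
      eq_one_neg_one_or_eq_neg_one_one_of_forall_zpow he hu₃ fun t ht => by
        linear_combination H t ht⟩

theorem cosetLocus_subset_sixLines : cosetLocus ⊆ sixLines := by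
  rintro z ⟨u₁, u₂, u₃, e₁, e₂, e₃, hne, ⟨t, ht, rfl⟩, hall⟩
  exact mem_sixLines_of_forall_mem_cubicSurface hne hall ht

theorem mem_cosetLocus_of_forall_mem_cubicSurface {u₁ u₂ u₃ : ℂ} {e₁ e₂ e₃ : ℤ}
    (hne : ¬(e₁ = 0 ∧ e₂ = 0 ∧ e₃ = 0))
    (hall : ∀ t : ℂ, t ≠ 0 → (u₁ * t ^ e₁, u₂ * t ^ e₂, u₃ * t ^ e₃) ∈ cubicSurface) :
    (u₁, u₂, u₃) ∈ cosetLocus :=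
  ⟨u₁, u₂, u₃, e₁, e₂, e₃, hne, ⟨1, one_ne_zero, by simp⟩, hall⟩

theorem sixLines_subset_cosetLocus : sixLines ⊆ cosetLocus := by
  rintro ⟨x, y, w⟩ (⟨h, hp⟩ | ⟨h, hp⟩ | ⟨h, hp⟩)
  · refine mem_cosetLocus_of_forall_mem_cubicSurface (e₁ := 1) (e₂ := 0) (e₃ := 0) (by decide)
      fun t ht => ?_
    rcases hp with ⟨rfl, rfl⟩ | ⟨rfl, rfl⟩ <;> norm_num [cubicSurface, h, ht]
  · refine mem_cosetLocus_of_forall_mem_cubicSurface (e₁ := 0) (e₂ := 1) (e₃ := 0) (by decide)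
      fun t ht => ?_
    rcases hp with ⟨rfl, rfl⟩ | ⟨rfl, rfl⟩ <;> norm_num [cubicSurface, h, ht]
  · refine mem_cosetLocus_of_forall_mem_cubicSurface (e₁ := 0) (e₂ := 0) (e₃ := 1) (by decide)
      fun t ht => ?_
    rcases hp with ⟨rfl, rfl⟩ | ⟨rfl, rfl⟩ <;> norm_num [cubicSurface, h, ht]

/-- The union of all positive-dimensional cosets of `G_m³` contained in the surface
`r₁r₂r₃ + r₁ + r₂ + r₃ = 0` is exactly the union of the six lines obtained by permuting
the coordinates of `{(1,-1)} × G_m`. -/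
theorem cosetLocus_eq_sixLines : cosetLocus = sixLines :=
  cosetLocus_subset_sixLines.antisymm sixLines_subset_cosetLocus
end

section
/- Suppose b = (b₁, b₂, b₃) ∈ (ℂ*)³ has all nonzero coordinates, and let C_b ⊂ ℂ² be the line {(x₁, x₂) : b₁x₁ + b₂x₂ + b₃ = 0} minus the points where x₁x₂(x₁±1)(x₂±1)(x₁±x₂) = 0. Then the image of C_b under the map R(x₁,x₂) = ((x₂-1)/(x₂+1), (1-x₁)/(1+x₁), (x₁-x₂)/(x₁+x₂)) into G_m^3 is not contained in any translate of a proper algebraic subgroup of G_m^3. Equivalently, there is no (a₁,a₂,a₃) ∈ ℤ³ \ {0} such that ((x₂-1)/(x₂+1))^{a₁} · ((1-x₁)/(1+x₁))^{a₂} · ((x₁-x₂)/(x₁+x₂))^{a₃} is constant on C_b. -/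
/-!
Parametrise the line by `x₁`. Each coordinate of `R` becomes a ratio of two linear polynomials
in `x₁`, so if `R₁^a₁ R₂^a₂ R₃^a₃` is constant, comparing root multiplicities of numerator and
denominator shows that its order vanishes at every point `(x₁, x₂)` of the line, namely
`a₁([x₂ = 1] - [x₂ = -1]) + a₂([x₁ = 1] - [x₁ = -1]) + a₃([x₁ = x₂] - [x₁ = -x₂]) = 0`.
As `b₁b₂b₃ ≠ 0`, the line contains at most one of the four points `(±1, ±1)`, so one of its
points with `x₁ = ±1` lies on none of the other five lines, which forces `a₂ = 0`; in the same
way `a₁ = 0`. Finally the line meets `x₁ = x₂` or `x₁ = -x₂` away from the origin, so `a₃ = 0`.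
-/

open Polynomial Filter

theorem div_zpow_eq_toNat {K : Type*} [Field K] {z w : K} (hz : z ≠ 0) (hw : w ≠ 0) (e : ℤ) :
    (z / w) ^ e = z ^ e.toNat * w ^ (-e).toNat / (w ^ e.toNat * z ^ (-e).toNat) := by
  conv_lhs => rw [← e.toNat_sub_toNat_neg, zpow_sub₀ (div_ne_zero hz hw)]
  simp only [zpow_natCast, div_pow]
  field_simp

namespace Polynomial

section IsDomain

variable {R : Type*} [CommRing R] [IsDomain R]

theorem rootMultiplicity_pow (p : R[X]) (a : R) (n : ℕ) :
    rootMultiplicity a (p ^ n) = n * rootMultiplicity a p := by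
  classical
  simp only [← count_roots, roots_pow, Multiset.count_nsmul]

theorem rootMultiplicity_prod {ι : Type*} (s : Finset ι) (f : ι → R[X]) (hf : ∏ i ∈ s, f i ≠ 0)
    (a : R) : rootMultiplicity a (∏ i ∈ s, f i) = ∑ i ∈ s, rootMultiplicity a (f i) := by
  classical
  simp only [← count_roots, roots_prod f s hf, Multiset.count_bind]
  rfl

theorem rootMultiplicity_eq_ite_of_natDegree_le_one [DecidableEq R] {p : R[X]} (hp : p ≠ 0)
    (hdeg : p.natDegree ≤ 1) (a : R) :
    rootMultiplicity a p = if p.IsRoot a then 1 else 0 := by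
  split_ifs with h
  · refine le_antisymm ?_ ((rootMultiplicity_pos hp).2 h)
    rw [← count_roots]
    exact (Multiset.count_le_card _ _).trans ((card_roots' p).trans hdeg)
  · exact rootMultiplicity_eq_zero h

theorem eventually_cofinite_eval_ne_zero {p : R[X]} (hp : p ≠ 0) :
    ∀ᶠ x in cofinite, p.eval x ≠ 0 :=
  eventually_cofinite.2 (by simpa using finite_setOfPred_isRoot hp)

theorem rootMultiplicity_eq_of_eventually_eval_eq_mul [Infinite R] {F G : R[X]} {c : R}
    (hF : F ≠ 0) (h : ∀ᶠ x in cofinite, F.eval x = c * G.eval x) (a : R) :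
    rootMultiplicity a F = rootMultiplicity a G := by
  have hFG : F = C c * G :=
    eq_of_infinite_eval_eq _ _ (frequently_cofinite_iff_infinite.1 (by simpa using h.frequently))
  rw [hFG, rootMultiplicity_mul (hFG ▸ hF), rootMultiplicity_C, zero_add]

end IsDomain

theorem sum_mul_rootMultiplicity_sub_eq_zero {K ι : Type*} [Field K] [Infinite K] (s : Finset ι)
    {P Q : ι → K[X]} (hP : ∀ i ∈ s, P i ≠ 0) (hQ : ∀ i ∈ s, Q i ≠ 0) (e : ι → ℤ) {c : K}
    (h : ∀ᶠ x in cofinite, ∏ i ∈ s, ((P i).eval x / (Q i).eval x) ^ e i = c) (a : K) :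
    ∑ i ∈ s, e i * ((rootMultiplicity a (P i) : ℤ) - rootMultiplicity a (Q i)) = 0 := by
  have hprod (f : ι → K[X]) (n : ι → ℕ) (hf : ∀ i ∈ s, f i ≠ 0) : ∏ i ∈ s, f i ^ n i ≠ 0 :=
    Finset.prod_ne_zero_iff.2 fun i hi => pow_ne_zero _ (hf i hi)
  set F := (∏ i ∈ s, P i ^ (e i).toNat) * ∏ i ∈ s, Q i ^ (-e i).toNat with hF_def
  set G := (∏ i ∈ s, Q i ^ (e i).toNat) * ∏ i ∈ s, P i ^ (-e i).toNat with hG_def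
  have hF : F ≠ 0 := mul_ne_zero (hprod _ _ hP) (hprod _ _ hQ)
  have hG : G ≠ 0 := mul_ne_zero (hprod _ _ hQ) (hprod _ _ hP)
  have hFG : ∀ᶠ x in cofinite, F.eval x = c * G.eval x := by
    have hPQ : ∀ᶠ x in cofinite, ∀ i ∈ s, (P i).eval x ≠ 0 ∧ (Q i).eval x ≠ 0 :=
      (eventually_all_finset s).2 fun i hi =>
        (eventually_cofinite_eval_ne_zero (hP i hi)).and (eventually_cofinite_eval_ne_zero (hQ i hi))
    filter_upwards [h, hPQ] with x hx hPQx
    have hGx : G.eval x ≠ 0 := by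
      simp only [hG_def, eval_mul, eval_prod, eval_pow]
      exact mul_ne_zero (Finset.prod_ne_zero_iff.2 fun i hi => pow_ne_zero _ (hPQx i hi).2)
        (Finset.prod_ne_zero_iff.2 fun i hi => pow_ne_zero _ (hPQx i hi).1)
    rw [← div_eq_iff hGx, ← hx,
      Finset.prod_congr rfl fun i hi => div_zpow_eq_toNat (hPQx i hi).1 (hPQx i hi).2 (e i),
      Finset.prod_div_distrib, Finset.prod_mul_distrib, Finset.prod_mul_distrib]
    simp only [hF_def, hG_def, eval_mul, eval_prod, eval_pow]
  have hmult := rootMultiplicity_eq_of_eventually_eval_eq_mul hF hFG a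
  rw [rootMultiplicity_mul hF, rootMultiplicity_mul hG, rootMultiplicity_prod _ _ (hprod _ _ hP),
    rootMultiplicity_prod _ _ (hprod _ _ hQ), rootMultiplicity_prod _ _ (hprod _ _ hP),
    rootMultiplicity_prod _ _ (hprod _ _ hQ)] at hmult
  simp only [rootMultiplicity_pow, ← Finset.sum_add_distrib] at hmult
  calc _ = ∑ i ∈ s, ((((e i).toNat * rootMultiplicity a (P i) +
          (-e i).toNat * rootMultiplicity a (Q i) : ℕ) : ℤ) -
        ((e i).toNat * rootMultiplicity a (Q i) + (-e i).toNat * rootMultiplicity a (P i) : ℕ)) :=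
        Finset.sum_congr rfl fun i _ => by
          push_cast
          linear_combination ((rootMultiplicity a (Q i) : ℤ) - rootMultiplicity a (P i)) *
            (e i).toNat_sub_toNat_neg
    _ = 0 := by rw [Finset.sum_sub_distrib, sub_eq_zero]; exact_mod_cast hmult

end Polynomial

/-- The order at `(x, y)` of `R₁^a₁ R₂^a₂ R₃^a₃` restricted to a line on which each of the six
linear forms in `R` vanishes at most simply. -/
noncomputable def monomialOrderAt (a₁ a₂ a₃ : ℤ) (x y : ℂ) : ℤ :=
  a₁ * ((if y = 1 then 1 else 0) - if y = -1 then 1 else 0) +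
    a₂ * ((if x = 1 then 1 else 0) - if x = -1 then 1 else 0) +
    a₃ * ((if x = y then 1 else 0) - if x = -y then 1 else 0)

section monomialOrderAt

variable {a₁ a₂ a₃ : ℤ} {x y : ℂ}

theorem monomialOrderAt_one_left (hy : y ≠ 1 ∧ y ≠ -1) : monomialOrderAt a₁ a₂ a₃ 1 y = a₂ := by
  have h₁ : (1 : ℂ) ≠ y := Ne.symm hy.1
  have h₂ : (1 : ℂ) ≠ -y := fun h => hy.2 (by linear_combination h)
  norm_num [monomialOrderAt, hy.1, hy.2, h₁, h₂]

theorem monomialOrderAt_neg_one_left (hy : y ≠ 1 ∧ y ≠ -1) :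
    monomialOrderAt a₁ a₂ a₃ (-1) y = -a₂ := by
  have h₁ : (-1 : ℂ) ≠ y := Ne.symm hy.2
  have h₂ : (-1 : ℂ) ≠ -y := fun h => hy.1 (by linear_combination h)
  norm_num [monomialOrderAt, hy.1, hy.2, h₁, h₂]

theorem monomialOrderAt_one_right (hx : x ≠ 1 ∧ x ≠ -1) : monomialOrderAt a₁ a₂ a₃ x 1 = a₁ := by
  norm_num [monomialOrderAt, hx.1, hx.2]

theorem monomialOrderAt_neg_one_right (hx : x ≠ 1 ∧ x ≠ -1) :
    monomialOrderAt a₁ a₂ a₃ x (-1) = -a₁ := by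
  norm_num [monomialOrderAt, hx.1, hx.2]

theorem monomialOrderAt_self (hx : x ≠ 0) : monomialOrderAt 0 0 a₃ x x = a₃ := by
  simp [monomialOrderAt, self_eq_neg, hx]

theorem monomialOrderAt_neg (hx : x ≠ 0) : monomialOrderAt 0 0 a₃ x (-x) = -a₃ := by
  simp [monomialOrderAt, self_eq_neg, hx]

end monomialOrderAt

-- Along the line, `x₂ = (lineParam b₁ b₂ b₃).eval x₁` and `Rᵢ` is `lineNum i / lineDen i`
-- evaluated at `x₁`.
noncomputable def lineParam (b₁ b₂ b₃ : ℂ) : ℂ[X] := C (-b₁ / b₂) * X + C (-b₃ / b₂)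

noncomputable def lineNum (b₁ b₂ b₃ : ℂ) : Fin 3 → ℂ[X] :=
  ![lineParam b₁ b₂ b₃ - 1, 1 - X, X - lineParam b₁ b₂ b₃]

noncomputable def lineDen (b₁ b₂ b₃ : ℂ) : Fin 3 → ℂ[X] :=
  ![lineParam b₁ b₂ b₃ + 1, 1 + X, X + lineParam b₁ b₂ b₃]

section Line

variable {b₁ b₂ b₃ : ℂ}

theorem eval_lineParam_eq_iff (hb₂ : b₂ ≠ 0) {x y : ℂ} :
    (lineParam b₁ b₂ b₃).eval x = y ↔ b₁ * x + b₂ * y + b₃ = 0 := by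
  simp only [lineParam, eval_add, eval_mul, eval_C, eval_X]
  constructor
  · rintro rfl
    field_simp
    ring
  · intro h
    field_simp
    linear_combination -h

theorem lineParam_ne_zero (hb₂ : b₂ ≠ 0) (hb₃ : b₃ ≠ 0) : lineParam b₁ b₂ b₃ ≠ 0 := by
  intro h
  simpa [lineParam, hb₂, hb₃] using congrArg (eval 0) h

theorem lineNum_ne_zero (hb₁ : b₁ ≠ 0) (hb₂ : b₂ ≠ 0) (hb₃ : b₃ ≠ 0) (i : Fin 3) :
    lineNum b₁ b₂ b₃ i ≠ 0 := by
  fin_cases i <;> intro h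
  · simpa [lineNum, lineParam, coeff_one, hb₁, hb₂] using congrArg (coeff · 1) h
  · simpa [lineNum] using congrArg (eval 0) h
  · simpa [lineNum, lineParam, hb₂, hb₃] using congrArg (eval 0) h

theorem lineDen_ne_zero (hb₁ : b₁ ≠ 0) (hb₂ : b₂ ≠ 0) (hb₃ : b₃ ≠ 0) (i : Fin 3) :
    lineDen b₁ b₂ b₃ i ≠ 0 := by
  fin_cases i <;> intro h
  · simpa [lineDen, lineParam, coeff_one, hb₁, hb₂] using congrArg (coeff · 1) h
  · simpa [lineDen] using congrArg (eval 0) h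
  · simpa [lineDen, lineParam, hb₂, hb₃] using congrArg (eval 0) h

theorem natDegree_lineNum_le (i : Fin 3) : (lineNum b₁ b₂ b₃ i).natDegree ≤ 1 := by
  fin_cases i
  all_goals
    simp only [lineNum, lineParam, Fin.zero_eta, Fin.mk_one, Fin.reduceFinMk, Matrix.cons_val]
    compute_degree

theorem natDegree_lineDen_le (i : Fin 3) : (lineDen b₁ b₂ b₃ i).natDegree ≤ 1 := by
  fin_cases i
  all_goals
    simp only [lineDen, lineParam, Fin.zero_eta, Fin.mk_one, Fin.reduceFinMk, Matrix.cons_val]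
    compute_degree

theorem eventually_prod_lineNum_div_lineDen_eq (hb₁ : b₁ ≠ 0) (hb₂ : b₂ ≠ 0) (hb₃ : b₃ ≠ 0)
    {a₁ a₂ a₃ : ℤ} {c : ℂ}
    (H : ∀ x₁ x₂ : ℂ, b₁ * x₁ + b₂ * x₂ + b₃ = 0 →
      x₁ ≠ 0 → x₂ ≠ 0 → x₁ ≠ 1 → x₁ ≠ -1 → x₂ ≠ 1 → x₂ ≠ -1 → x₁ ≠ x₂ → x₁ ≠ -x₂ →
      ((x₂ - 1) / (x₂ + 1)) ^ a₁ * ((1 - x₁) / (1 + x₁)) ^ a₂ * ((x₁ - x₂) / (x₁ + x₂)) ^ a₃ = c) :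
    ∀ᶠ x in cofinite,
      ∏ i, ((lineNum b₁ b₂ b₃ i).eval x / (lineDen b₁ b₂ b₃ i).eval x) ^ ![a₁, a₂, a₃] i = c := by
  have hnum i := eventually_cofinite_eval_ne_zero (lineNum_ne_zero hb₁ hb₂ hb₃ i)
  have hden i := eventually_cofinite_eval_ne_zero (lineDen_ne_zero hb₁ hb₂ hb₃ i)
  filter_upwards [eventually_cofinite_eval_ne_zero X_ne_zero,
    eventually_cofinite_eval_ne_zero (lineParam_ne_zero (b₁ := b₁) hb₂ hb₃),
    hnum 0, hnum 1, hnum 2, hden 0, hden 1, hden 2] with x hx hy hn₀ hn₁ hn₂ hd₀ hd₁ hd₂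
  have hline : b₁ * x + b₂ * (lineParam b₁ b₂ b₃).eval x + b₃ = 0 :=
    (eval_lineParam_eq_iff hb₂).1 rfl
  set y := (lineParam b₁ b₂ b₃).eval x
  rw [Fin.prod_univ_three]
  simp only [lineNum, lineDen, Matrix.cons_val_zero, Matrix.cons_val_one, Matrix.cons_val_two,
    Matrix.head_cons, Matrix.tail_cons, eval_sub, eval_add, eval_one, eval_X]
    at hx hn₀ hn₁ hn₂ hd₀ hd₁ hd₂ ⊢
  exact H x y hline hx hy (sub_ne_zero.1 hn₁).symm (fun h => hd₁ (by rw [h]; ring))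
    (sub_ne_zero.1 hn₀) (mt eq_neg_iff_add_eq_zero.1 hd₀) (sub_ne_zero.1 hn₂)
    (mt eq_neg_iff_add_eq_zero.1 hd₂)

theorem monomialOrderAt_eq_zero (hb₁ : b₁ ≠ 0) (hb₂ : b₂ ≠ 0) (hb₃ : b₃ ≠ 0)
    {a₁ a₂ a₃ : ℤ} {c : ℂ}
    (h : ∀ᶠ x in cofinite,
      ∏ i, ((lineNum b₁ b₂ b₃ i).eval x / (lineDen b₁ b₂ b₃ i).eval x) ^ ![a₁, a₂, a₃] i = c)
    {x y : ℂ} (hxy : b₁ * x + b₂ * y + b₃ = 0) : monomialOrderAt a₁ a₂ a₃ x y = 0 := by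
  have hsum := sum_mul_rootMultiplicity_sub_eq_zero Finset.univ
    (fun i _ => lineNum_ne_zero hb₁ hb₂ hb₃ i) (fun i _ => lineDen_ne_zero hb₁ hb₂ hb₃ i) _ h x
  have hμ (i : Fin 3) : (rootMultiplicity x (lineNum b₁ b₂ b₃ i) : ℤ) -
      rootMultiplicity x (lineDen b₁ b₂ b₃ i) =
      (if (lineNum b₁ b₂ b₃ i).IsRoot x then 1 else 0) -
        if (lineDen b₁ b₂ b₃ i).IsRoot x then 1 else 0 := by
    rw [rootMultiplicity_eq_ite_of_natDegree_le_one (lineNum_ne_zero hb₁ hb₂ hb₃ i)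
      (natDegree_lineNum_le i), rootMultiplicity_eq_ite_of_natDegree_le_one
      (lineDen_ne_zero hb₁ hb₂ hb₃ i) (natDegree_lineDen_le i)]
    push_cast
    rfl
  have hY : (lineParam b₁ b₂ b₃).eval x = y := (eval_lineParam_eq_iff hb₂).2 hxy
  simp only [hμ] at hsum
  simp only [Fin.sum_univ_three, lineNum, lineDen, Matrix.cons_val_zero, Matrix.cons_val_one,
    Matrix.cons_val_two, Matrix.head_cons, Matrix.tail_cons, IsRoot.def, eval_sub, eval_add,
    eval_one, eval_X, hY, sub_eq_zero, @eq_comm ℂ 1 x, add_eq_zero_iff_eq_neg (a := y),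
    add_eq_zero_iff_eq_neg (a := x), add_eq_zero_iff_eq_neg' (a := (1 : ℂ))] at hsum
  exact hsum

/-- A line with `b₁b₃ ≠ 0` contains at most one of the points `(±1, ±1)`. -/
theorem ne_one_and_ne_neg_one_or (hb₁ : b₁ ≠ 0) (hb₃ : b₃ ≠ 0) {y y' : ℂ}
    (h : b₁ + b₂ * y + b₃ = 0) (h' : -b₁ + b₂ * y' + b₃ = 0) :
    (y ≠ 1 ∧ y ≠ -1) ∨ (y' ≠ 1 ∧ y' ≠ -1) := by
  have : ¬((y = 1 ∨ y = -1) ∧ (y' = 1 ∨ y' = -1)) := by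
    rintro ⟨rfl | rfl, rfl | rfl⟩
    · exact hb₁ (by linear_combination (h - h') / 2)
    · exact hb₃ (by linear_combination (h + h') / 2)
    · exact hb₃ (by linear_combination (h + h') / 2)
    · exact hb₁ (by linear_combination (h - h') / 2)
  tauto

theorem eq_zero_of_forall_monomialOrderAt_eq_zero (hb₁ : b₁ ≠ 0) (hb₂ : b₂ ≠ 0) (hb₃ : b₃ ≠ 0)
    {a₁ a₂ a₃ : ℤ}
    (h : ∀ x y, b₁ * x + b₂ * y + b₃ = 0 → monomialOrderAt a₁ a₂ a₃ x y = 0) :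
    a₁ = 0 ∧ a₂ = 0 ∧ a₃ = 0 := by
  have exists_snd (x : ℂ) : ∃ y, b₁ * x + b₂ * y + b₃ = 0 :=
    ⟨-(b₁ * x + b₃) / b₂, by rw [mul_div_cancel₀ _ hb₂]; ring⟩
  have exists_fst (y : ℂ) : ∃ x, b₁ * x + b₂ * y + b₃ = 0 :=
    ⟨-(b₂ * y + b₃) / b₁, by rw [mul_div_cancel₀ _ hb₁]; ring⟩
  have ha₂ : a₂ = 0 := by
    obtain ⟨y, hy⟩ := exists_snd 1
    obtain ⟨y', hy'⟩ := exists_snd (-1)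
    rcases ne_one_and_ne_neg_one_or (b₂ := b₂) (y := y) (y' := y') hb₁ hb₃
      (by linear_combination hy) (by linear_combination hy') with hne | hne
    · exact (monomialOrderAt_one_left hne).symm.trans (h 1 y hy)
    · exact neg_eq_zero.1 ((monomialOrderAt_neg_one_left hne).symm.trans (h (-1) y' hy'))
  have ha₁ : a₁ = 0 := by
    obtain ⟨x, hx⟩ := exists_fst 1
    obtain ⟨x', hx'⟩ := exists_fst (-1)
    rcases ne_one_and_ne_neg_one_or (b₂ := b₁) (y := x) (y' := x') hb₂ hb₃
      (by linear_combination hx) (by linear_combination hx') with hne | hne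
    · exact (monomialOrderAt_one_right hne).symm.trans (h x 1 hx)
    · exact neg_eq_zero.1 ((monomialOrderAt_neg_one_right hne).symm.trans (h x' (-1) hx'))
  subst ha₁ ha₂
  refine ⟨rfl, rfl, ?_⟩
  by_cases hb : b₁ + b₂ = 0
  · have hb' : b₁ - b₂ ≠ 0 := fun h' => hb₁ (by linear_combination (hb + h') / 2)
    set x := -b₃ / (b₁ - b₂) with hx_def
    have hx : x ≠ 0 := div_ne_zero (neg_ne_zero.2 hb₃) hb'
    have hmem : b₁ * x + b₂ * -x + b₃ = 0 := by
      rw [hx_def]; field_simp; ring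
    exact neg_eq_zero.1 ((monomialOrderAt_neg hx).symm.trans (h x (-x) hmem))
  · set x := -b₃ / (b₁ + b₂) with hx_def
    have hx : x ≠ 0 := div_ne_zero (neg_ne_zero.2 hb₃) hb
    have hmem : b₁ * x + b₂ * x + b₃ = 0 := by
      rw [hx_def]; field_simp; ring
    exact (monomialOrderAt_self hx).symm.trans (h x x hmem)

end Line

/-- Let `b = (b₁,b₂,b₃) ∈ (ℂ*)³`, and let `C_b` be the curve
`{(x₁,x₂) : b₁x₁ + b₂x₂ + b₃ = 0}` minus the points where
`x₁x₂(x₁±1)(x₂±1)(x₁±x₂) = 0`.  Then the image of `C_b` under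
`R(x₁,x₂) = ((x₂-1)/(x₂+1), (1-x₁)/(1+x₁), (x₁-x₂)/(x₁+x₂))`
is not contained in any translate of a proper algebraic subgroup of `G_m³`:
there is no `(a₁,a₂,a₃) ∈ ℤ³ \ {0}` making the monomial
`R₁^{a₁} R₂^{a₂} R₃^{a₃}` constant on `C_b`. -/
theorem image_not_in_coset (b₁ b₂ b₃ : ℂ) (hb₁ : b₁ ≠ 0) (hb₂ : b₂ ≠ 0) (hb₃ : b₃ ≠ 0) :
    ¬ ∃ (a₁ a₂ a₃ : ℤ), ¬(a₁ = 0 ∧ a₂ = 0 ∧ a₃ = 0) ∧ ∃ c : ℂ,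
      ∀ x₁ x₂ : ℂ, b₁ * x₁ + b₂ * x₂ + b₃ = 0 →
        x₁ ≠ 0 → x₂ ≠ 0 → x₁ ≠ 1 → x₁ ≠ -1 → x₂ ≠ 1 → x₂ ≠ -1 → x₁ ≠ x₂ → x₁ ≠ -x₂ →
        ((x₂ - 1) / (x₂ + 1)) ^ a₁ * ((1 - x₁) / (1 + x₁)) ^ a₂ *
          ((x₁ - x₂) / (x₁ + x₂)) ^ a₃ = c := by
  rintro ⟨a₁, a₂, a₃, ha, c, H⟩
  have hconst := eventually_prod_lineNum_div_lineDen_eq hb₁ hb₂ hb₃ H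
  exact ha (eq_zero_of_forall_monomialOrderAt_eq_zero hb₁ hb₂ hb₃ fun _ _ hxy =>
    monomialOrderAt_eq_zero hb₁ hb₂ hb₃ hconst hxy)
end

section
/- The homogeneous degree-12 polynomial c₁¹² - 3c₁¹⁰c₂² + 6c₁⁸c₂⁴ - 7c₁⁶c₂⁶ + 6c₁⁴c₂⁸ - 3c₁²c₂¹⁰ + c₂¹² - 3c₁¹⁰c₃² - 51c₁⁸c₂²c₃² + 78c₁⁶c₂⁴c₃² + 78c₁⁴c₂⁶c₃² - 51c₁²c₂⁸c₃² - 3c₂¹⁰c₃² + 6c₁⁸c₃⁴ + 78c₁⁶c₂²c₃⁴ + 414c₁⁴c₂⁴c₃⁴ + 78c₁²c₂⁶c₃⁴ + 6c₂⁸c₃⁴ - 7c₁⁶c₃⁶ + 78c₁⁴c₂²c₃⁶ + 78c₁²c₂⁴c₃⁶ - 7c₂⁶c₃⁶ + 6c₁⁴c₃⁸ - 51c₁²c₂²c₃⁸ + 6c₂⁴c₃⁸ - 3c₁²c₃¹⁰ - 3c₂²c₃¹⁰ + c₃¹² has no nontrivial zero in ℤ³, because it has no nontrivial zeros modulo 2.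 -/
/-!
Modulo 2 the form vanishes only at the origin, so every integer zero has even coordinates.
By homogeneity, halving them gives another integer zero, and infinite descent leaves only the
trivial zero.
-/

theorem Int.eq_zero_of_forall_pow_dvd {p : ℕ} (hp : 1 < p) {x : ℤ}
    (h : ∀ k : ℕ, (p : ℤ) ^ k ∣ x) : x = 0 := by
  refine Int.eq_zero_of_dvd_of_natAbs_lt_natAbs (h x.natAbs) ?_
  rw [Int.natAbs_pow, Int.natAbs_natCast]
  exact Nat.lt_pow_self hp

theorem eq_zero_of_forall_exists_smul {ι : Type*} {p : ℕ} (hp : 1 < p) {Z : (ι → ℤ) → Prop}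
    (hZ : ∀ x, Z x → ∃ y, x = p • y ∧ Z y) {x : ι → ℤ} (hx : Z x) : x = 0 := by
  have hpow : ∀ k : ℕ, ∀ x, Z x → ∃ y, x = p ^ k • y := by
    intro k
    induction k with
    | zero => exact fun x _ => ⟨x, (one_smul ℕ x).symm⟩
    | succ k ih =>
      intro x hx
      obtain ⟨y, rfl, hy⟩ := hZ x hx
      obtain ⟨z, rfl⟩ := ih y hy
      exact ⟨z, by rw [smul_smul, pow_succ']⟩
  funext i
  refine Int.eq_zero_of_forall_pow_dvd hp fun k => ?_
  obtain ⟨y, rfl⟩ := hpow k x hx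
  exact ⟨y i, by simp⟩

def dodecicForm {R : Type*} [CommRing R] (x y z : R) : R :=
  x^12 - 3*x^10*y^2 + 6*x^8*y^4 - 7*x^6*y^6 + 6*x^4*y^8 - 3*x^2*y^10
    + y^12 - 3*x^10*z^2 - 51*x^8*y^2*z^2 + 78*x^6*y^4*z^2 + 78*x^4*y^6*z^2
    - 51*x^2*y^8*z^2 - 3*y^10*z^2 + 6*x^8*z^4 + 78*x^6*y^2*z^4
    + 414*x^4*y^4*z^4 + 78*x^2*y^6*z^4 + 6*y^8*z^4 - 7*x^6*z^6
    + 78*x^4*y^2*z^6 + 78*x^2*y^4*z^6 - 7*y^6*z^6 + 6*x^4*z^8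
    - 51*x^2*y^2*z^8 + 6*y^4*z^8 - 3*x^2*z^10 - 3*y^2*z^10 + z^12

section dodecicForm

variable {R : Type*} [CommRing R]

theorem map_dodecicForm {S : Type*} [CommRing S] (f : R →+* S) (x y z : R) :
    f (dodecicForm x y z) = dodecicForm (f x) (f y) (f z) := by
  simp only [dodecicForm, map_sub, map_add, map_mul, map_pow, map_ofNat]

theorem dodecicForm_mul_mul_mul (t x y z : R) :
    dodecicForm (t * x) (t * y) (t * z) = t ^ 12 * dodecicForm x y z := by
  unfold dodecicForm
  ring

end dodecicForm

theorem dodecicForm_eq_zero_iff_zmod_two (x y z : ZMod 2) :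
    dodecicForm x y z = 0 ↔ x = 0 ∧ y = 0 ∧ z = 0 := by
  revert x y z
  unfold dodecicForm
  decide

theorem two_dvd_of_dodecicForm_eq_zero {a b c : ℤ} (h : dodecicForm a b c = 0) :
    2 ∣ a ∧ 2 ∣ b ∧ 2 ∣ c := by
  have h2 : dodecicForm (a : ZMod 2) b c = 0 := by
    have := congrArg (Int.castRingHom (ZMod 2)) h
    rwa [map_dodecicForm, map_zero] at this
  simpa only [ZMod.intCast_zmod_eq_zero_iff_dvd, Nat.cast_ofNat] using
    (dodecicForm_eq_zero_iff_zmod_two _ _ _).mp h2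

/-- The homogeneous degree-12 polynomial
`c₁¹² - 3c₁¹⁰c₂² + 6c₁⁸c₂⁴ - 7c₁⁶c₂⁶ + 6c₁⁴c₂⁸ - 3c₁²c₂¹⁰ + c₂¹² - 3c₁¹⁰c₃²
 - 51c₁⁸c₂²c₃² + 78c₁⁶c₂⁴c₃² + 78c₁⁴c₂⁶c₃² - 51c₁²c₂⁸c₃² - 3c₂¹⁰c₃² + 6c₁⁸c₃⁴
 + 78c₁⁶c₂²c₃⁴ + 414c₁⁴c₂⁴c₃⁴ + 78c₁²c₂⁶c₃⁴ + 6c₂⁸c₃⁴ - 7c₁⁶c₃⁶ + 78c₁⁴c₂²c₃⁶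
 + 78c₁²c₂⁴c₃⁶ - 7c₂⁶c₃⁶ + 6c₁⁴c₃⁸ - 51c₁²c₂²c₃⁸ + 6c₂⁴c₃⁸ - 3c₁²c₃¹⁰ - 3c₂²c₃¹⁰ + c₃¹²`
has no nontrivial zero in `ℤ³` (as it has no nontrivial zeros modulo 2). -/
theorem degree_twelve_poly_no_nontrivial_integral_zero (c₁ c₂ c₃ : ℤ)
    (h : c₁^12 - 3*c₁^10*c₂^2 + 6*c₁^8*c₂^4 - 7*c₁^6*c₂^6 + 6*c₁^4*c₂^8 - 3*c₁^2*c₂^10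
        + c₂^12 - 3*c₁^10*c₃^2 - 51*c₁^8*c₂^2*c₃^2 + 78*c₁^6*c₂^4*c₃^2 + 78*c₁^4*c₂^6*c₃^2
        - 51*c₁^2*c₂^8*c₃^2 - 3*c₂^10*c₃^2 + 6*c₁^8*c₃^4 + 78*c₁^6*c₂^2*c₃^4
        + 414*c₁^4*c₂^4*c₃^4 + 78*c₁^2*c₂^6*c₃^4 + 6*c₂^8*c₃^4 - 7*c₁^6*c₃^6
        + 78*c₁^4*c₂^2*c₃^6 + 78*c₁^2*c₂^4*c₃^6 - 7*c₂^6*c₃^6 + 6*c₁^4*c₃^8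
        - 51*c₁^2*c₂^2*c₃^8 + 6*c₂^4*c₃^8 - 3*c₁^2*c₃^10 - 3*c₂^2*c₃^10 + c₃^12 = 0) :
    c₁ = 0 ∧ c₂ = 0 ∧ c₃ = 0 := by
  have descent : ∀ v : Fin 3 → ℤ, dodecicForm (v 0) (v 1) (v 2) = 0 →
      ∃ w, v = 2 • w ∧ dodecicForm (w 0) (w 1) (w 2) = 0 := by
    intro v hv
    obtain ⟨⟨a, ha⟩, ⟨b, hb⟩, ⟨c, hc⟩⟩ := two_dvd_of_dodecicForm_eq_zero hv
    refine ⟨![a, b, c], ?_, ?_⟩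
    · ext i
      fin_cases i <;> simp [ha, hb, hc]
    · rw [ha, hb, hc, dodecicForm_mul_mul_mul] at hv
      simpa using hv
  simpa using eq_zero_of_forall_exists_smul one_lt_two descent (x := ![c₁, c₂, c₃]) h
end

section
/- Let ω be the meromorphic one-form on ℙ¹ given by ω = Σᵢ₌₁³ ( rᵢ/(z - xᵢ) - rᵢ/(z + xᵢ) ) dz with distinct nonzero points ±x₁, ±x₂, ±x₃ and nonzero residues rᵢ. Then ω has a zero of order 4 at z = 0 (i.e. ω = C z⁴ dz / Πᵢ(z² - xᵢ²) for some constant C) if and only if Σᵢ₌₁³ rᵢ x_{i+1} x_{i+2} = 0 and Σᵢ₌₁³ rᵢ xᵢ (x_{i+1}² + x_{i+2}²) = 0, indices mod 3. -/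
/-!
Pairing the poles `±xᵢ` gives `rᵢ/(z - xᵢ) - rᵢ/(z + xᵢ) = 2rᵢxᵢ/(z² - xᵢ²)`, so over the common
denominator `∏ᵢ (z² - xᵢ²)` the numerator is an even quartic
`2(∑ rᵢxᵢ) z⁴ - 2(∑ rᵢxᵢ(x_{i+1}² + x_{i+2}²)) z² + 2x₁x₂x₃ ∑ rᵢx_{i+1}x_{i+2}`.
It equals `C z⁴` off the finitely many poles exactly when its `z²` and constant coefficients
vanish, since a polynomial with infinitely many roots is zero.
-/

open Finset Filter Polynomial

theorem Polynomial.eq_zero_of_eventually_isRoot_cofinite {R : Type*} [CommRing R] [IsDomain R]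
    [Infinite R] {p : R[X]} (h : ∀ᶠ z in cofinite, p.IsRoot z) : p = 0 :=
  p.eq_zero_of_infinite_isRoot (frequently_cofinite_iff_infinite.1 h.frequently)

theorem eq_zero_of_eventually_quartic_eq_zero {R : Type*} [CommRing R] [IsDomain R] [Infinite R]
    {a b c : R} (h : ∀ᶠ z in cofinite, a * z ^ 4 + b * z ^ 2 + c = 0) :
    a = 0 ∧ b = 0 ∧ c = 0 := by
  have hp : C a * X ^ 4 + C b * X ^ 2 + C c = 0 :=
    eq_zero_of_eventually_isRoot_cofinite (h.mono fun z hz => by simpa using hz)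
  refine ⟨?_, ?_, ?_⟩
  · simpa using congrArg (coeff · 4) hp
  · simpa using congrArg (coeff · 2) hp
  · simpa using congrArg (coeff · 0) hp

section Field

variable {K : Type*} [Field K]

theorem sq_sub_sq_ne_zero {z x : K} (h₁ : z ≠ x) (h₂ : z ≠ -x) : z ^ 2 - x ^ 2 ≠ 0 :=
  fun h => (sq_eq_sq_iff_eq_or_eq_neg.1 (sub_eq_zero.1 h)).elim h₁ h₂

theorem div_sub_sub_div_add_eq_div_sq_sub_sq {r x z : K} (h₁ : z ≠ x) (h₂ : z ≠ -x) :
    r / (z - x) - r / (z + x) = 2 * r * x / (z ^ 2 - x ^ 2) := by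
  have : z - x ≠ 0 := sub_ne_zero.2 h₁
  have : z + x ≠ 0 := by rwa [← sub_neg_eq_add, sub_ne_zero]
  rw [sq_sub_sq]
  field_simp
  ring

theorem sum_fin_three_div_sub (a y : Fin 3 → K) {w : K} (hw : ∀ i, w - y i ≠ 0) :
    ∑ i, a i / (w - y i) =
      ((∑ i, a i) * w ^ 2 - (∑ i, a i * (y (i + 1) + y (i + 2))) * w
        + ∑ i, a i * y (i + 1) * y (i + 2)) / ∏ i, (w - y i) := by
  have h₀ := hw 0
  have h₁ := hw 1
  have h₂ := hw 2
  simp only [Fin.sum_univ_three, Fin.prod_univ_three, Fin.isValue, Fin.reduceAdd]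
  field_simp
  ring

theorem sum_fin_three_div_sub_sub_div_add (r x : Fin 3 → K) {z : K}
    (hz : ∀ i, z ≠ x i ∧ z ≠ -x i) :
    ∑ i, (r i / (z - x i) - r i / (z + x i)) =
      (2 * (∑ i, r i * x i) * z ^ 4
        - 2 * (∑ i, r i * x i * (x (i + 1) ^ 2 + x (i + 2) ^ 2)) * z ^ 2
        + 2 * (∏ i, x i) * ∑ i, r i * x (i + 1) * x (i + 2)) / ∏ i, (z ^ 2 - x i ^ 2) := by
  rw [sum_congr rfl fun i _ => div_sub_sub_div_add_eq_div_sq_sub_sq (r := r i) (hz i).1 (hz i).2,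
    sum_fin_three_div_sub _ _ fun i => sq_sub_sq_ne_zero (hz i).1 (hz i).2]
  congr 1
  simp only [Fin.sum_univ_three, Fin.prod_univ_three, Fin.isValue, Fin.reduceAdd]
  ring

end Field

theorem fourfold_zero_iff_general (r x : Fin 3 → ℂ)
    (hx : ∀ i, x i ≠ 0) :
    (∃ C : ℂ, ∀ z : ℂ, (∀ i, z ≠ x i ∧ z ≠ -x i) →
        ∑ i, (r i / (z - x i) - r i / (z + x i)) =
          C * z ^ 4 / ∏ i, (z ^ 2 - (x i) ^ 2)) ↔
      (∑ i, r i * x (i + 1) * x (i + 2) = 0 ∧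
       ∑ i, r i * x i * ((x (i + 1)) ^ 2 + (x (i + 2)) ^ 2) = 0) := by
  have hω := fun z => sum_fin_three_div_sub_sub_div_add (z := z) r x
  set S₁ := ∑ i, r i * x (i + 1) * x (i + 2)
  set S₂ := ∑ i, r i * x i * ((x (i + 1)) ^ 2 + (x (i + 2)) ^ 2)
  constructor
  · rintro ⟨C, hC⟩
    have hpoles : ∀ᶠ z in cofinite, ∀ i, z ≠ x i ∧ z ≠ -x i :=
      eventually_all.2 fun i => (eventually_cofinite_ne _).and (eventually_cofinite_ne _)
    obtain ⟨-, hS₂, hS₁⟩ := eq_zero_of_eventually_quartic_eq_zero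
      (a := 2 * (∑ i, r i * x i) - C) (b := -2 * S₂) (c := 2 * (∏ i, x i) * S₁) <|
      hpoles.mono fun z hz => by
        have hD : ∏ i, (z ^ 2 - x i ^ 2) ≠ 0 :=
          prod_ne_zero_iff.2 fun i _ => sq_sub_sq_ne_zero (hz i).1 (hz i).2
        have := (hω z hz).symm.trans (hC z hz)
        rw [div_left_inj' hD] at this
        linear_combination this
    exact ⟨by simpa [prod_eq_zero_iff, hx] using hS₁, by simpa using hS₂⟩
  · rintro ⟨h₁, h₂⟩
    exact ⟨2 * ∑ i, r i * x i, fun z hz => by rw [hω z hz, h₁, h₂]; ring_nf⟩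

/-- Let `ω = ∑ᵢ (rᵢ/(z-xᵢ) - rᵢ/(z+xᵢ)) dz` be a meromorphic one-form on `ℙ¹` with
distinct nonzero poles `±x₁, ±x₂, ±x₃` and nonzero residues `rᵢ`.  Then `ω` has a zero
of order 4 at `z = 0`, i.e. `ω = C z⁴ dz / ∏ᵢ(z² - xᵢ²)` for some constant `C`, if and
only if `∑ rᵢ x_{i+1} x_{i+2} = 0` and `∑ rᵢ xᵢ (x_{i+1}² + x_{i+2}²) = 0` (indices
mod 3). -/
theorem fourfold_zero_iff (r x : Fin 3 → ℂ)
    (hr : ∀ i, r i ≠ 0) (hx : ∀ i, x i ≠ 0)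
    (hdist : ∀ i j, i ≠ j → x i ≠ x j ∧ x i ≠ -x j) :
    (∃ C : ℂ, ∀ z : ℂ, (∀ i, z ≠ x i ∧ z ≠ -x i) →
        ∑ i, (r i / (z - x i) - r i / (z + x i)) =
          C * z ^ 4 / ∏ i, (z ^ 2 - (x i) ^ 2)) ↔
      (∑ i, r i * x (i + 1) * x (i + 2) = 0 ∧
       ∑ i, r i * x i * ((x (i + 1)) ^ 2 + (x (i + 2)) ^ 2) = 0) :=
  fourfold_zero_iff_general r x hx
end

section
/- Let Γ be a finite connected graph with no separating edges (i.e. 2-edge-connected), with edge set E. Let B ⊂ (ℚ*)^E be the subgroup of tuples (q_e) such that q_e = q_f whenever e and f lie in the same block of Γ. Then B is exactly the stabilizer, under the diagonal action of (ℚ*)^E on H¹(Γ, V; ℚ) given by (q_e)·[e₀*] = q_{e₀}[e₀*], of the image of the coboundary map δ : H⁰(V; ℚ)/H⁰(Γ; ℚ) → H¹(Γ, V; ℚ). -/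
/-- A (finite, possibly multi-) graph: edges carry a chosen orientation via
source and target maps. -/
structure Multigraph where
  V : Type
  E : Type
  src : E → V
  tgt : E → V

namespace Multigraph

variable (G : Multigraph)

/-- A walk in a multigraph, traversing edges in either direction. -/
inductive Walk : G.V → G.V → Type
  | nil (v : G.V) : Walk v v
  | cons {u x v : G.V} (e : G.E)
      (h : (G.src e = u ∧ G.tgt e = x) ∨ (G.src e = x ∧ G.tgt e = u))
      (w : Walk x v) : Walk u v

namespace Walk

variable {G}

/-- The list of edges traversed by a walk. -/
def edges : ∀ {u v : G.V}, G.Walk u v → List G.E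
  | _, _, .nil _ => []
  | _, _, .cons e _ w => e :: w.edges

/-- The list of vertices visited by a walk (starting vertex first). -/
def support : ∀ {u v : G.V}, G.Walk u v → List G.V
  | u, _, .nil _ => [u]
  | u, _, .cons _ _ w => u :: w.support

/-- A circuit: a nonempty closed walk with no repeated edge and no repeated vertex
other than the starting/ending one. -/
def IsCircuit {v : G.V} (w : G.Walk v v) : Prop :=
  w.edges ≠ [] ∧ w.edges.Nodup ∧ w.support.tail.Nodup

end Walk

/-- The multigraph is connected. -/
def Connected : Prop := ∀ u v : G.V, Nonempty (G.Walk u v)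

/-- An edge is separating if removing it disconnects the graph. -/
def IsSeparatingEdge (e : G.E) : Prop :=
  ∃ u v : G.V, ¬ ∃ w : G.Walk u v, e ∉ w.edges

/-- Two edges lie in the same block (maximal subgraph which cannot be disconnected by
removing a single vertex) iff they are equal or lie on a common circuit. -/
def SameBlock (e f : G.E) : Prop :=
  e = f ∨ ∃ (v : G.V) (w : G.Walk v v), w.IsCircuit ∧ e ∈ w.edges ∧ f ∈ w.edges

/-- The image of the coboundary map `δ : H⁰(V;ℚ)/H⁰(Γ;ℚ) → H¹(Γ,V;ℚ)`, where
`H¹(Γ,V;ℚ)` is identified with `ℚ^E` via the basis of dual edge classes `[e*]`. -/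
def coboundaryImage : Set (G.E → ℚ) :=
  {c | ∃ φ : G.V → ℚ, ∀ e, c e = φ (G.tgt e) - φ (G.src e)}

end Multigraph

/-!
A cochain of the form `p · dφ : e ↦ p e (φ (tgt e) - φ (src e))` is a coboundary iff its
weighted sums along closed walks vanish: integrate it from a root chosen in each component.

If `p` is constant on blocks, every closed walk has zero sum: it reduces to a trivial one by
cutting off closed subwalks whose vertices are distinct, and along such a subwalk (a circuit,
or an edge traversed back and forth) `p` is constant, so its sum telescopes to zero. Applying
this to `q` and `q⁻¹` shows that `q` stabilizes `Im δ`.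

Conversely, if `q` stabilizes `Im δ`, then `q · dφ` is a coboundary, so its sum around a
circuit vanishes for every `φ`. Taking for `φ` the indicator of a vertex of the circuit shows
that the two circuit edges at that vertex have the same weight.
-/

namespace Multigraph

namespace Walk

variable {G : Multigraph}

def append : ∀ {u v w : G.V}, G.Walk u v → G.Walk v w → G.Walk u w
  | _, _, _, .nil _, t => t
  | _, _, _, .cons e h s, t => .cons e h (s.append t)

def reverse : ∀ {u v : G.V}, G.Walk u v → G.Walk v u
  | _, _, .nil v => .nil v
  | _, _, .cons e h s => s.reverse.append (.cons e h.symm (.nil _))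

/-- The sum of `p · dφ` along the walk, each edge oriented in the direction of travel. -/
def weightedSum (p : G.E → ℚ) (φ : G.V → ℚ) : ∀ {u v : G.V}, G.Walk u v → ℚ
  | _, _, .nil _ => 0
  | u, _, .cons (x := x) e _ s => p e * (φ x - φ u) + s.weightedSum p φ

section

variable {u v x : G.V} (e : G.E)
  (h : (G.src e = u ∧ G.tgt e = x) ∨ (G.src e = x ∧ G.tgt e = u))

@[simp] lemma edges_nil : (Walk.nil v : G.Walk v v).edges = [] := rfl

@[simp] lemma edges_cons (s : G.Walk x v) : (Walk.cons e h s).edges = e :: s.edges := rfl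

@[simp] lemma support_nil : (Walk.nil v : G.Walk v v).support = [v] := rfl

@[simp] lemma support_cons (s : G.Walk x v) : (Walk.cons e h s).support = u :: s.support := rfl

@[simp] lemma weightedSum_nil (p : G.E → ℚ) (φ : G.V → ℚ) :
    (Walk.nil v : G.Walk v v).weightedSum p φ = 0 := rfl

@[simp] lemma weightedSum_cons (p : G.E → ℚ) (φ : G.V → ℚ) (s : G.Walk x v) :
    (Walk.cons e h s).weightedSum p φ = p e * (φ x - φ u) + s.weightedSum p φ := rfl

end

variable {u v w : G.V}

lemma start_mem_support (s : G.Walk u v) : u ∈ s.support := by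
  cases s <;> simp

lemma end_mem_support (s : G.Walk u v) : v ∈ s.support := by
  induction s with
  | nil => simp
  | cons e h s ih => exact List.mem_cons_of_mem _ ih

lemma mem_support_of_mem_edges {s : G.Walk u v} {e : G.E} (he : e ∈ s.edges) :
    G.src e ∈ s.support ∧ G.tgt e ∈ s.support := by
  induction s with
  | nil => simp at he
  | cons f h s ih =>
    rcases List.mem_cons.1 he with rfl | he
    · rcases h with ⟨hs, ht⟩ | ⟨hs, ht⟩ <;> simp [hs, ht, start_mem_support]
    · exact (ih he).imp (List.mem_cons_of_mem _) (List.mem_cons_of_mem _)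

lemma edges_nodup_of_support_nodup {s : G.Walk u v} (hs : s.support.Nodup) : s.edges.Nodup := by
  induction s with
  | nil => simp
  | cons f h s ih =>
    rw [support_cons, List.nodup_cons] at hs
    refine List.nodup_cons.2 ⟨fun hf => hs.1 ?_, ih hs.2⟩
    rcases h with ⟨hsrc, _⟩ | ⟨_, htgt⟩
    · exact hsrc ▸ (mem_support_of_mem_edges hf).1
    · exact htgt ▸ (mem_support_of_mem_edges hf).2

lemma edges_eq_nil_of_support_nodup {s : G.Walk u u} (hs : s.support.Nodup) : s.edges = [] := by
  cases s with
  | nil => rfl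
  | cons e h s => exact absurd (end_mem_support s) (List.nodup_cons.1 hs).1

lemma edges_eq_singleton_of_mem {x : G.V} {s : G.Walk x u} (hs : s.support.Nodup) {e : G.E}
    (h : (G.src e = u ∧ G.tgt e = x) ∨ (G.src e = x ∧ G.tgt e = u)) (he : e ∈ s.edges) :
    s.edges = [e] := by
  cases s with
  | nil => simp at he
  | @cons _ y _ f hf s =>
    rw [support_cons, List.nodup_cons] at hs
    rcases List.mem_cons.1 he with rfl | he
    · obtain rfl : y = u := by grind
      simp [edges_eq_nil_of_support_nodup hs.2]
    · have := mem_support_of_mem_edges he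
      rcases h with ⟨_, ht⟩ | ⟨hsrc, _⟩
      · exact absurd (ht ▸ this.2) hs.1
      · exact absurd (hsrc ▸ this.1) hs.1

lemma support_sublist_append_left (s : G.Walk u v) (t : G.Walk v w) :
    s.support.Sublist (s.append t).support := by
  induction s with
  | nil => simpa [append] using start_mem_support t
  | cons e h s ih => simpa [append] using ih t

lemma support_sublist_append_right (s : G.Walk u v) (t : G.Walk v w) :
    t.support.Sublist (s.append t).support := by
  induction s with
  | nil => exact List.Sublist.refl _
  | cons e h s ih => exact (ih t).cons _

lemma exists_eq_append_of_mem_support {s : G.Walk u w} (hv : v ∈ s.support) :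
    ∃ (s₁ : G.Walk u v) (s₂ : G.Walk v w), s = s₁.append s₂ := by
  induction s with
  | nil => obtain rfl := List.mem_singleton.1 hv; exact ⟨.nil _, .nil _, rfl⟩
  | @cons u x w e h s ih =>
    by_cases hvu : v = u
    · subst hvu; exact ⟨.nil _, .cons e h s, rfl⟩
    · obtain ⟨s₁, s₂, rfl⟩ := ih (List.mem_of_ne_of_mem hvu hv)
      exact ⟨.cons e h s₁, s₂, rfl⟩

section WeightedSum

variable (p : G.E → ℚ) (φ : G.V → ℚ)

lemma weightedSum_append (s : G.Walk u v) (t : G.Walk v w) :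
    (s.append t).weightedSum p φ = s.weightedSum p φ + t.weightedSum p φ := by
  induction s with
  | nil => simp [append]
  | cons e h s ih => simp only [append, weightedSum_cons, ih]; ring

lemma weightedSum_reverse (s : G.Walk u v) : s.reverse.weightedSum p φ = -s.weightedSum p φ := by
  induction s with
  | nil => simp [reverse]
  | cons e h s ih => simp only [reverse, weightedSum_append, ih, weightedSum_cons, weightedSum_nil]; ring

lemma weightedSum_eq_mul_sub {Q : ℚ} (s : G.Walk u v) (hQ : ∀ a ∈ s.edges, p a = Q) :
    s.weightedSum p φ = Q * (φ v - φ u) := by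
  induction s with
  | nil => simp
  | cons e h s ih =>
    simp only [edges_cons, List.forall_mem_cons] at hQ
    rw [weightedSum_cons, ih hQ.2, hQ.1]
    ring

lemma weightedSum_eq_sub {ψ : G.V → ℚ}
    (hψ : ∀ e, p e * (φ (G.tgt e) - φ (G.src e)) = ψ (G.tgt e) - ψ (G.src e))
    (s : G.Walk u v) : s.weightedSum p φ = ψ v - ψ u := by
  induction s with
  | nil => simp
  | cons e h s ih =>
    rw [weightedSum_cons, ih]
    rcases h with ⟨hs, ht⟩ | ⟨hs, ht⟩
    · rw [← hs, ← ht, hψ e]; ring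
    · rw [← hs, ← ht]; linarith [hψ e]

lemma weightedSum_eq_zero_of_forall_mem_support (s : G.Walk u v)
    (hφ : ∀ z ∈ s.support, φ z = 0) : s.weightedSum p φ = 0 := by
  induction s with
  | nil => simp
  | cons e h s ih =>
    simp only [support_cons, List.forall_mem_cons] at hφ
    rw [weightedSum_cons, ih hφ.2, hφ.1, hφ.2 _ (start_mem_support s)]
    ring

end WeightedSum

variable {p : G.E → ℚ}

lemma sameBlock_of_mem_edges {s : G.Walk u u} (hs : s.support.tail.Nodup) {a b : G.E}
    (ha : a ∈ s.edges) (hb : b ∈ s.edges) : G.SameBlock a b := by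
  cases s with
  | nil => simp at ha
  | cons e h s =>
    rw [support_cons, List.tail_cons] at hs
    by_cases he : e ∈ s.edges
    · rw [edges_cons, edges_eq_singleton_of_mem hs h he] at ha hb
      simp only [List.mem_cons, List.not_mem_nil, or_false, or_self] at ha hb
      exact Or.inl (ha.trans hb.symm)
    · refine Or.inr ⟨u, Walk.cons e h s, ⟨List.cons_ne_nil _ _, ?_, hs⟩, ha, hb⟩
      exact List.nodup_cons.2 ⟨he, edges_nodup_of_support_nodup hs⟩

lemma weightedSum_eq_zero_of_support_tail_nodup
    (hp : ∀ e f : G.E, G.SameBlock e f → p e = p f) (φ : G.V → ℚ) {s : G.Walk u u}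
    (hs : s.support.tail.Nodup) : s.weightedSum p φ = 0 := by
  cases s with
  | nil => rfl
  | cons e h s =>
    rw [weightedSum_eq_mul_sub p φ _ (fun a ha => hp a e
      (sameBlock_of_mem_edges hs ha List.mem_cons_self)), sub_self, mul_zero]

lemma exists_support_nodup_weightedSum_eq (hp : ∀ e f : G.E, G.SameBlock e f → p e = p f)
    (φ : G.V → ℚ) (s : G.Walk u v) :
    ∃ t : G.Walk u v, t.support.Nodup ∧ t.weightedSum p φ = s.weightedSum p φ := by
  induction s with
  | nil => exact ⟨.nil _, by simp, rfl⟩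
  | @cons u x v e h s ih =>
    obtain ⟨t, ht, hsum⟩ := ih
    by_cases hu : u ∈ t.support
    · obtain ⟨t₁, t₂, rfl⟩ := exists_eq_append_of_mem_support hu
      have hloop : (Walk.cons e h t₁).weightedSum p φ = 0 :=
        weightedSum_eq_zero_of_support_tail_nodup hp φ
          (ht.sublist (support_sublist_append_left t₁ t₂))
      refine ⟨t₂, ht.sublist (support_sublist_append_right t₁ t₂), ?_⟩
      rw [weightedSum_cons, ← hsum, weightedSum_append]
      rw [weightedSum_cons] at hloop
      linarith
    · exact ⟨.cons e h t, List.nodup_cons.2 ⟨hu, ht⟩, by simp [hsum]⟩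

lemma weightedSum_eq_zero_of_sameBlock (hp : ∀ e f : G.E, G.SameBlock e f → p e = p f)
    (φ : G.V → ℚ) (s : G.Walk u u) : s.weightedSum p φ = 0 := by
  obtain ⟨t, ht, hsum⟩ := exists_support_nodup_weightedSum_eq hp φ s
  rw [← hsum, weightedSum_eq_zero_of_support_tail_nodup hp φ (ht.sublist (List.tail_sublist _))]

lemma forall_edges_eq_of_weightedSum_eq {Q : ℚ} {s : G.Walk u v} (hs : s.support.Nodup)
    (hφ : ∀ φ : G.V → ℚ, s.weightedSum p φ = Q * (φ v - φ u)) : ∀ a ∈ s.edges, p a = Q := by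
  classical
  induction s with
  | nil => simp
  | @cons u x v e h s ih =>
    rw [support_cons, List.nodup_cons] at hs
    have hxu : x ≠ u := fun hxu => hs.1 (hxu ▸ start_mem_support s)
    have hvu : v ≠ u := fun hvu => hs.1 (hvu ▸ end_mem_support s)
    have hpe : p e = Q := by
      have hind := hφ fun z => if z = u then 1 else 0
      rw [weightedSum_cons, weightedSum_eq_zero_of_forall_mem_support p _ s
        (fun z hz => if_neg fun (hzu : z = u) => hs.1 (hzu ▸ hz))] at hind
      simp only [if_neg hxu, if_neg hvu, if_pos] at hind
      linarith
    refine List.forall_mem_cons.2 ⟨hpe, ih hs.2 fun φ => ?_⟩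
    have := hφ φ
    rw [weightedSum_cons, hpe] at this
    linarith

lemma eq_of_weightedSum_eq_zero {s : G.Walk u u} (hs : s.support.tail.Nodup)
    (hφ : ∀ φ : G.V → ℚ, s.weightedSum p φ = 0) {a b : G.E} (ha : a ∈ s.edges)
    (hb : b ∈ s.edges) : p a = p b := by
  cases s with
  | nil => simp at ha
  | @cons _ x _ e h s =>
    have hconst : ∀ c ∈ (Walk.cons e h s).edges, p c = p e :=
      List.forall_mem_cons.2 ⟨rfl, forall_edges_eq_of_weightedSum_eq hs fun φ => by
        have := hφ φ; rw [weightedSum_cons] at this; linarith⟩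
    rw [hconst a ha, hconst b hb]

end Walk

def reachableSetoid (G : Multigraph) : Setoid G.V where
  r u v := Nonempty (G.Walk u v)
  iseqv := ⟨fun v => ⟨.nil v⟩, fun ⟨s⟩ => ⟨s.reverse⟩, fun ⟨s⟩ ⟨t⟩ => ⟨s.append t⟩⟩

lemma mem_coboundaryImage_of_weightedSum_eq_zero {G : Multigraph} (p : G.E → ℚ) (φ : G.V → ℚ)
    (hsum : ∀ u (s : G.Walk u u), s.weightedSum p φ = 0) :
    (fun e => p e * (φ (G.tgt e) - φ (G.src e))) ∈ G.coboundaryImage := by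
  let root (v : G.V) : G.V := (Quotient.mk G.reachableSetoid v).out
  have path (v : G.V) : G.Walk (root v) v := (Quotient.mk_out (s := G.reachableSetoid) v).some
  have hclosed {a b : G.V} (s : G.Walk a b) (hab : a = b) : s.weightedSum p φ = 0 := by
    subst hab; exact hsum a s
  refine ⟨fun v => (path v).weightedSum p φ, fun e => ?_⟩
  let edge : G.Walk (G.src e) (G.tgt e) := .cons e (Or.inl ⟨rfl, rfl⟩) (.nil _)
  have hroot : root (G.src e) = root (G.tgt e) :=
    congrArg Quotient.out (Quotient.sound ⟨edge⟩)
  have := hclosed ((path (G.src e)).append (edge.append (path (G.tgt e)).reverse)) hroot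
  simp only [Walk.weightedSum_append, Walk.weightedSum_reverse, edge, Walk.weightedSum_cons,
    Walk.weightedSum_nil] at this
  linarith

lemma mapsTo_mul_coboundaryImage {G : Multigraph} {p : G.E → ℚ}
    (hp : ∀ e f : G.E, G.SameBlock e f → p e = p f) :
    Set.MapsTo (fun c e => p e * c e) G.coboundaryImage G.coboundaryImage := by
  rintro c ⟨φ, hφ⟩
  obtain rfl : c = _ := funext hφ
  exact mem_coboundaryImage_of_weightedSum_eq_zero p φ fun _ s =>
    Walk.weightedSum_eq_zero_of_sameBlock hp φ s

end Multigraph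

open Multigraph

theorem block_subgroup_eq_stabilizer_general (G : Multigraph)
    (q : G.E → ℚ) (hq : ∀ e, q e ≠ 0) :
    (∀ e f : G.E, G.SameBlock e f → q e = q f) ↔
      (fun c : G.E → ℚ => fun e => q e * c e) '' G.coboundaryImage = G.coboundaryImage := by
  constructor
  · intro hb
    have hb_inv : ∀ e f : G.E, G.SameBlock e f → (q e)⁻¹ = (q f)⁻¹ := fun e f h =>
      congrArg Inv.inv (hb e f h)
    refine (mapsTo_mul_coboundaryImage hb).image_subset.antisymm fun c hc =>
      ⟨_, mapsTo_mul_coboundaryImage hb_inv hc, ?_⟩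
    funext e
    exact mul_inv_cancel_left₀ (hq e) (c e)
  · rintro himg e f (rfl | ⟨v, s, ⟨-, -, hs⟩, he, hf⟩)
    · rfl
    refine Walk.eq_of_weightedSum_eq_zero hs (fun φ => ?_) he hf
    obtain ⟨ψ, hψ⟩ : (fun e => q e * (φ (G.tgt e) - φ (G.src e))) ∈ G.coboundaryImage :=
      himg ▸ ⟨_, ⟨φ, fun _ => rfl⟩, rfl⟩
    rw [Walk.weightedSum_eq_sub q φ hψ, sub_self]

/-- Let `Γ` be a finite connected graph with no separating edges.  A tuple
`q ∈ (ℚ*)^E`, acting diagonally on `H¹(Γ,V;ℚ) ≅ ℚ^E` by `q·[e*] = q_e [e*]`,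
stabilizes the image of the coboundary map `δ : H⁰(V;ℚ)/H⁰(Γ;ℚ) → H¹(Γ,V;ℚ)`
if and only if `q_e = q_f` whenever `e` and `f` lie in the same block of `Γ`:
i.e. the subgroup `B` is exactly the stabilizer of `Im δ`. -/
theorem block_subgroup_eq_stabilizer (G : Multigraph) [Fintype G.V] [Fintype G.E]
    (hconn : G.Connected) (hsep : ∀ e : G.E, ¬ G.IsSeparatingEdge e)
    (q : G.E → ℚ) (hq : ∀ e, q e ≠ 0) :
    (∀ e f : G.E, G.SameBlock e f → q e = q f) ↔
      (fun c : G.E → ℚ => fun e => q e * c e) '' G.coboundaryImage = G.coboundaryImage :=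
  block_subgroup_eq_stabilizer_general G q hq
end

section
/- Let r₁, r₂, r₃, r₄ be complex numbers with r₄ = -(r₁+r₂+r₃) and with r₁, r₂, r₃ linearly independent over ℚ, and in particular r₃/r₄ ≠ ±1. Then the system of equations Σᵢ₌₁⁴ rᵢ ζᵢ = 0 and Σᵢ₌₁⁴ rᵢ ζᵢ⁻¹ = 0 with ζ₁ = 1 has no solution family of the form ζᵢ = ηᵢ t^{aᵢ} (i = 2,3,4) valid for all t ∈ ℂ*, where η₂, η₃, η₄ ∈ ℂ* are fixed and (a₂,a₃,a₄) ∈ ℤ³ is not all zero. -/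
/-!
Substituting `ζᵢ = ηᵢ t^{aᵢ}` turns both equations into Laurent polynomials in `t` vanishing on
`ℂ*`. The characters `t ↦ t^b` of `ℂ*` are linearly independent, so on each class of indices with
equal exponent the coefficients `rᵢηᵢ`, and likewise `rᵢηᵢ⁻¹`, sum to zero. If the exponents are
not all equal, one of these classes has at most two elements: a singleton `{i}` forces `rᵢ = 0`,
a pair `{i, j}` forces `rᵢ = ±rⱼ`, and the `ℚ`-independence of `r₁, r₂, r₃` rules out both.
-/

open Finset

noncomputable def zpowChar (b : ℤ) : ℂˣ →* ℂ := (Units.coeHom ℂ).comp (zpowGroupHom b)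

@[simp]
lemma zpowChar_apply (b : ℤ) (u : ℂˣ) : zpowChar b u = (u : ℂ) ^ b := by
  simp [zpowChar, zpowGroupHom]

lemma zpowChar_injective : Function.Injective zpowChar := by
  intro b b' h
  have h2 : (((2 : ℝ) ^ b : ℝ) : ℂ) = ((2 : ℝ) ^ b' : ℝ) := by
    push_cast
    simpa using DFunLike.congr_fun h (Units.mk0 2 two_ne_zero)
  exact zpow_right_injective₀ two_pos (by norm_num) (Complex.ofReal_injective h2)

lemma linearIndependent_zpowChar : LinearIndependent ℂ (fun b : ℤ => ⇑(zpowChar b)) :=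
  (linearIndependent_monoidHom ℂˣ ℂ).comp zpowChar zpowChar_injective

lemma sum_filter_exponent_eq_zero {ι : Type*} [Fintype ι] (c : ι → ℂ) (a : ι → ℤ)
    (h : ∀ t : ℂ, t ≠ 0 → ∑ i, c i * t ^ a i = 0) (e : ℤ) :
    ∑ i with a i = e, c i = 0 := by
  have hf : ∑ i, Finsupp.single (a i) (c i) = 0 := by
    apply linearIndependent_iff.mp linearIndependent_zpowChar
    funext u
    simpa [map_sum] using h u u.ne_zero
  simpa [Finsupp.finsetSum_apply, Finsupp.single_apply, sum_ite, filter_filter]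
    using DFunLike.congr_fun hf e

lemma eq_or_eq_neg_of_mul_add_mul_eq_zero {K : Type*} [Field K] {x y p q : K}
    (hp : p ≠ 0) (hq : q ≠ 0) (h₁ : x * p + y * q = 0) (h₂ : x * p⁻¹ + y * q⁻¹ = 0) :
    x = y ∨ x = -y := by
  have h₂' : x * q + y * p = 0 := by
    field_simp at h₂
    linear_combination h₂
  have h : (x ^ 2 - y ^ 2) * (p * q) = 0 := by
    linear_combination (x * q) * h₁ - (y * q) * h₂'
  exact sq_eq_sq_iff_eq_or_eq_neg.mp
    (sub_eq_zero.mp ((mul_eq_zero.mp h).resolve_right (mul_ne_zero hp hq)))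

lemma exists_eq_or_add_eq_zero_of_sum_eq_zero {K ι : Type*} [Field K] {S : Finset ι}
    (hS : S.Nonempty) (hS₂ : #S ≤ 2) {r η : ι → K} (hη : ∀ i ∈ S, η i ≠ 0)
    (h₁ : ∑ i ∈ S, r i * η i = 0) (h₂ : ∑ i ∈ S, r i * (η i)⁻¹ = 0) :
    ∃ i j, (i ≠ j ∧ r i = r j) ∨ r i + r j = 0 := by
  classical
  obtain hS₁ | hS₂ : #S = 1 ∨ #S = 2 := by have := hS.card_pos; omega
  · obtain ⟨i, rfl⟩ := card_eq_one.mp hS₁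
    have : r i = 0 := by simpa [hη i (mem_singleton_self i)] using h₁
    exact ⟨i, i, .inr (by simp [this])⟩
  · obtain ⟨i, j, hij, rfl⟩ := card_eq_two.mp hS₂
    rw [sum_pair hij] at h₁ h₂
    obtain h | h := eq_or_eq_neg_of_mul_add_mul_eq_zero (hη i (by simp)) (hη j (by simp)) h₁ h₂
    · exact ⟨i, j, .inl ⟨hij, h⟩⟩
    · exact ⟨i, j, .inr (by rw [h, neg_add_cancel])⟩

theorem exponent_eq_of_forall_solution {ι : Type*} [Fintype ι] (hι : Fintype.card ι ≤ 4)
    {r η : ι → ℂ} {a : ι → ℤ} (hr : Function.Injective r) (hr' : ∀ i j, r i + r j ≠ 0)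
    (hη : ∀ i, η i ≠ 0)
    (h : ∀ t : ℂ, t ≠ 0 →
      ∑ i, r i * (η i * t ^ a i) = 0 ∧ ∑ i, r i * (η i * t ^ a i)⁻¹ = 0)
    (i j : ι) : a i = a j := by
  classical
  by_contra hij
  have fibre (e : ℤ) : (∑ k with a k = e, r k * η k = 0) ∧
      ∑ k with a k = e, r k * (η k)⁻¹ = 0 := by
    refine ⟨sum_filter_exponent_eq_zero _ a (fun t ht => ?_) e, ?_⟩
    · simpa only [mul_assoc] using (h t ht).1
    · simpa only [Pi.neg_apply, neg_inj] using
        sum_filter_exponent_eq_zero (fun k => r k * (η k)⁻¹) (-a) (fun t ht => by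
          simpa only [Pi.neg_apply, mul_inv, ← zpow_neg, mul_assoc] using (h t ht).2) (-e)
  have hdisj : Disjoint (univ.filter (a · = a i)) (univ.filter (a · = a j)) :=
    disjoint_filter.mpr fun k _ hk hk' => hij (hk.symm.trans hk')
  have hcard_le := (card_union_of_disjoint hdisj).symm.trans_le ((card_le_univ _).trans hι)
  obtain ⟨e, hne, hcard⟩ : ∃ e, ({k | a k = e} : Finset ι).Nonempty ∧ #{k | a k = e} ≤ 2 := by
    by_cases hi : #({k | a k = a i} : Finset ι) ≤ 2
    · exact ⟨a i, ⟨i, by simp⟩, hi⟩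
    · exact ⟨a j, ⟨j, by simp⟩, by omega⟩
  obtain ⟨k, l, hkl | hkl⟩ :=
    exists_eq_or_add_eq_zero_of_sum_eq_zero hne hcard (fun k _ => hη k) (fibre e).1 (fibre e).2
  · exact hkl.1 (hr hkl.2)
  · exact hr' k l hkl

lemma injective_and_add_ne_zero_of_linearIndependent {r₁ r₂ r₃ : ℂ}
    (hli : LinearIndependent ℚ ![r₁, r₂, r₃]) :
    Function.Injective ![r₁, r₂, r₃, -(r₁ + r₂ + r₃)] ∧
      ∀ i j, ![r₁, r₂, r₃, -(r₁ + r₂ + r₃)] i + ![r₁, r₂, r₃, -(r₁ + r₂ + r₃)] j ≠ 0 := by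
  set L := Fintype.linearCombination ℚ ![r₁, r₂, r₃]
  have hL : Function.Injective L := hli.fintypeLinearCombination_injective
  set c : Fin 4 → Fin 3 → ℚ := ![![1, 0, 0], ![0, 1, 0], ![0, 0, 1], ![-1, -1, -1]]
  have hc : ![r₁, r₂, r₃, -(r₁ + r₂ + r₃)] = L ∘ c := by
    funext i
    fin_cases i <;> simp [L, c, Fintype.linearCombination_apply, Fin.sum_univ_three]
    ring
  rw [hc]
  refine ⟨hL.comp (by decide), fun i j => ?_⟩
  rw [Function.comp_apply, Function.comp_apply, ← map_add, map_ne_zero_iff L hL]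
  fin_cases i <;> fin_cases j <;> simp [c, funext_iff, Fin.forall_fin_succ]

/-- Let `r₁,r₂,r₃,r₄ ∈ ℂ` with `r₄ = -(r₁+r₂+r₃)` and `r₁,r₂,r₃` linearly independent
over `ℚ`.  Then the system `∑ᵢ rᵢζᵢ = 0`, `∑ᵢ rᵢζᵢ⁻¹ = 0` with `ζ₁ = 1` admits no
one-parameter family of solutions `ζᵢ = ηᵢ t^{aᵢ}` (`i = 2,3,4`) valid for all
`t ∈ ℂ*`, with fixed `η₂,η₃,η₄ ∈ ℂ*` and `(a₂,a₃,a₄) ∈ ℤ³` not all zero. -/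
theorem no_torus_translate_of_solutions (r₁ r₂ r₃ r₄ : ℂ)
    (h4 : r₄ = -(r₁ + r₂ + r₃))
    (hli : LinearIndependent ℚ ![r₁, r₂, r₃]) :
    ¬ ∃ (η₂ η₃ η₄ : ℂ) (a₂ a₃ a₄ : ℤ),
        η₂ ≠ 0 ∧ η₃ ≠ 0 ∧ η₄ ≠ 0 ∧ ¬(a₂ = 0 ∧ a₃ = 0 ∧ a₄ = 0) ∧
        ∀ t : ℂ, t ≠ 0 →
          r₁ + r₂ * (η₂ * t ^ a₂) + r₃ * (η₃ * t ^ a₃) + r₄ * (η₄ * t ^ a₄) = 0 ∧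
          r₁ + r₂ * (η₂ * t ^ a₂)⁻¹ + r₃ * (η₃ * t ^ a₃)⁻¹ + r₄ * (η₄ * t ^ a₄)⁻¹ = 0 := by
  rintro ⟨η₂, η₃, η₄, a₂, a₃, a₄, hη₂, hη₃, hη₄, ha, hsol⟩
  subst h4
  obtain ⟨hr, hr'⟩ := injective_and_add_ne_zero_of_linearIndependent hli
  have hconst := exponent_eq_of_forall_solution (η := ![1, η₂, η₃, η₄])
    (a := ![0, a₂, a₃, a₄]) (by simp) hr hr' (fun i => by fin_cases i <;> simp [*])
    (fun t ht => by simpa [Fin.sum_univ_four] using hsol t ht)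
  exact ha ⟨hconst 1 0, hconst 2 0, hconst 3 0⟩
end
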